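/- Let K be a proper cone in ℝⁿ, A an n×n real matrix with AK ⊆ K, b ∈ K nonzero, and λ > ρ_b(A). If the equation (A - λI)x = b has a solution x ∈ K, then λ is a distinguished eigenvalue of A for K, i.e., A has an eigenvector in K corresponding to λ. -/

import Mathlib

open Filter Matrix
open scoped Topology

/-- The local spectral radius of `A` at `b`, defined as `limsup ‖A^m b‖^(1/m)`. -/
noncomputable def localRho {n : ℕ} (A : Matrix (Fin n) (Fin n) ℝ) (b : Fin n → ℝ) : ℝ :=
  limsup (fun m : ℕ => ‖(A ^ m).mulVec b‖ ^ ((1 : ℝ) / m)) atTop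

/-- A proper cone in `ℝⁿ`: closed, convex, pointed, with nonempty interior. -/
structure IsProperCone {n : ℕ} (K : Set (Fin n → ℝ)) : Prop where
  convex : Convex ℝ K
  isClosed : IsClosed K
  smul_mem : ∀ c : ℝ, 0 ≤ c → ∀ x ∈ K, c • x ∈ K
  pointed : K ∩ (-K) = {0}
  full : (interior K).Nonempty

/-!
Since `ρ_b(A) < λ`, the terms of the Neumann series `y = ∑ λ^{-(m+1)} A^m b` decay geometrically,
so it converges; its terms lie in `K`, hence so does `y`, and `(λ - A) y = b`. Adding this to
`(A - λ) x = b` gives `A (x + y) = λ (x + y)`, and `x + y ≠ 0` because otherwise `x ∈ K ∩ -K`,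
so `x = 0` and `b = 0`.
-/

namespace IsProperCone

variable {n : ℕ} {K : Set (Fin n → ℝ)}

lemma zero_mem (hK : IsProperCone K) : (0 : Fin n → ℝ) ∈ K := by
  obtain ⟨v, hv⟩ := hK.full
  simpa using hK.smul_mem 0 le_rfl v (interior_subset hv)

lemma add_mem (hK : IsProperCone K) {u v : Fin n → ℝ} (hu : u ∈ K) (hv : v ∈ K) :
    u + v ∈ K := by
  have := hK.smul_mem 2 zero_le_two _ <|
    hK.convex hu hv (a := 1 / 2) (b := 1 / 2) (by norm_num) (by norm_num) (by norm_num)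
  rwa [smul_add, smul_smul, smul_smul, show (2 : ℝ) * (1 / 2) = 1 by norm_num, one_smul,
    one_smul] at this

lemma eq_zero_of_mem_of_neg_mem (hK : IsProperCone K) {u : Fin n → ℝ} (hu : u ∈ K)
    (hu' : -u ∈ K) : u = 0 := by
  have : u ∈ K ∩ -K := ⟨hu, hu'⟩
  rwa [hK.pointed] at this

lemma mem_of_hasSum (hK : IsProperCone K) {f : ℕ → Fin n → ℝ} {y : Fin n → ℝ}
    (hf : HasSum f y) (hfK : ∀ m, f m ∈ K) : y ∈ K :=
  hK.isClosed.mem_of_tendsto hf.tendsto_sum_nat <| Eventually.of_forall fun _ =>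
    Finset.sum_induction f (· ∈ K) (fun _ _ => hK.add_mem) hK.zero_mem fun m _ => hfK m

end IsProperCone

lemma Matrix.pow_mulVec_mem {ι R : Type*} [Fintype ι] [DecidableEq ι] [CommSemiring R]
    {S : Set (ι → R)} {A : Matrix ι ι R} (hA : ∀ v ∈ S, A *ᵥ v ∈ S) {b : ι → R} (hb : b ∈ S)
    (m : ℕ) : (A ^ m) *ᵥ b ∈ S := by
  induction m with
  | zero => simpa using hb
  | succ m ih => simpa [pow_succ', ← mulVec_mulVec] using hA _ ih

lemma Matrix.mulVec_eq_of_hasSum_inv_pow_succ_smul_pow_mulVec {ι 𝕜 : Type*} [Fintype ι]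
    [DecidableEq ι] [Field 𝕜] [TopologicalSpace 𝕜] [IsTopologicalRing 𝕜] [T2Space 𝕜]
    {A : Matrix ι ι 𝕜} {b y : ι → 𝕜} {lam : 𝕜} (hlam : lam ≠ 0)
    (hy : HasSum (fun m : ℕ => lam⁻¹ ^ (m + 1) • (A ^ m) *ᵥ b) y) :
    A *ᵥ y = lam • y - b := by
  set f := fun m : ℕ => lam⁻¹ ^ (m + 1) • (A ^ m) *ᵥ b
  have hshift (m : ℕ) : A *ᵥ f m = lam • f (m + 1) := by
    simp only [f, mulVec_smul, mulVec_mulVec, ← pow_succ', smul_smul]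
    rw [pow_succ' lam⁻¹ (m + 1), ← mul_assoc, mul_inv_cancel₀ hlam, one_mul]
  have hAy : HasSum (fun m => lam • f (m + 1)) (A *ᵥ y) := by
    simpa only [Function.comp_def, mulVecLin_apply, hshift] using
      hy.map (mulVecLin A) (continuous_const.matrix_mulVec continuous_id)
  have htail : HasSum (fun m => lam • f (m + 1)) (lam • (y - lam⁻¹ • b)) := by
    simpa [f] using ((hasSum_nat_add_iff' 1).2 hy).const_smul lam
  rw [hAy.unique htail, smul_sub, smul_smul, mul_inv_cancel₀ hlam, one_smul]

lemma isBoundedUnder_rpow_one_div_of_le_pow_mul {u : ℕ → ℝ} {c d : ℝ} (hu0 : ∀ m, 0 ≤ u m)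
    (hc : 0 ≤ c) (hu : ∀ m, u m ≤ c ^ m * d) :
    IsBoundedUnder (· ≤ ·) atTop (fun m => u m ^ ((1 : ℝ) / m)) := by
  set C := max 1 c * max 1 d
  refine ⟨C, eventually_map.2 <| eventually_atTop.2 ⟨1, fun m hm => ?_⟩⟩
  have hpow : u m ≤ C ^ m := calc
    u m ≤ c ^ m * d := hu m
    _ ≤ c ^ m * max 1 d ^ m := by
      gcongr
      exact (le_max_right _ _).trans (le_self_pow₀ (le_max_left _ _) (by omega))
    _ ≤ max 1 c ^ m * max 1 d ^ m := by
      gcongr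
      exact le_max_right _ _
    _ = C ^ m := (mul_pow _ _ _).symm
  calc u m ^ ((1 : ℝ) / m) ≤ (C ^ m) ^ ((1 : ℝ) / m) := by gcongr; exact hu0 m
    _ = C := by
      rw [one_div, Real.pow_rpow_inv_natCast (by positivity) (by omega)]

section LocalRho

open scoped Matrix.Norms.Operator

variable {n : ℕ} (A : Matrix (Fin n) (Fin n) ℝ) (b : Fin n → ℝ)

lemma Matrix.norm_pow_mulVec_le (m : ℕ) : ‖(A ^ m) *ᵥ b‖ ≤ ‖A‖ ^ m * ‖b‖ := by
  induction m with
  | zero => simp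
  | succ m ih =>
    rw [pow_succ', ← mulVec_mulVec, pow_succ', mul_assoc]
    exact (linfty_opNorm_mulVec _ _).trans (by gcongr)

-- Without this bound, `limsup` on `ℝ` would be a junk value.
lemma isBoundedUnder_localRho :
    IsBoundedUnder (· ≤ ·) atTop (fun m : ℕ => ‖(A ^ m) *ᵥ b‖ ^ ((1 : ℝ) / m)) :=
  isBoundedUnder_rpow_one_div_of_le_pow_mul (fun _ => norm_nonneg _) (norm_nonneg A)
    (Matrix.norm_pow_mulVec_le A b)

lemma localRho_nonneg : 0 ≤ localRho A b :=
  le_limsup_of_frequently_le (Frequently.of_forall fun _ => by positivity)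
    (isBoundedUnder_localRho A b)

lemma eventually_norm_pow_mulVec_le_of_localRho_lt {r : ℝ} (hr : localRho A b < r) :
    ∀ᶠ m : ℕ in atTop, ‖(A ^ m) *ᵥ b‖ ≤ r ^ m := by
  filter_upwards [eventually_lt_of_limsup_lt hr (isBoundedUnder_localRho A b),
    eventually_ge_atTop 1] with m hm hm1
  have := pow_le_pow_left₀ (by positivity) hm.le m
  rwa [one_div, Real.rpow_inv_natCast_pow (norm_nonneg _) (by omega)] at this

lemma summable_inv_pow_succ_smul_pow_mulVec_of_localRho_lt {lam : ℝ}
    (hlam : localRho A b < lam) :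
    Summable (fun m : ℕ => lam⁻¹ ^ (m + 1) • (A ^ m) *ᵥ b) := by
  obtain ⟨r, hρr, hrlam⟩ := exists_between hlam
  have hr0 : 0 < r := (localRho_nonneg A b).trans_lt hρr
  have hlam0 : 0 < lam := hr0.trans hrlam
  refine Summable.of_norm_bounded_eventually_nat
    ((summable_geometric_of_lt_one (by positivity)
      ((div_lt_one hlam0).2 hrlam)).mul_left lam⁻¹) ?_
  filter_upwards [eventually_norm_pow_mulVec_le_of_localRho_lt A b hρr] with m hm
  calc ‖lam⁻¹ ^ (m + 1) • (A ^ m) *ᵥ b‖ = lam⁻¹ ^ (m + 1) * ‖(A ^ m) *ᵥ b‖ := by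
        rw [norm_smul, Real.norm_of_nonneg (by positivity)]
    _ ≤ lam⁻¹ ^ (m + 1) * r ^ m := by gcongr
    _ = lam⁻¹ * (r / lam) ^ m := by rw [div_eq_mul_inv, mul_pow, pow_succ']; ring

end LocalRho

theorem stmt11_general {n : ℕ} {K : Set (Fin n → ℝ)} (hK : IsProperCone K)
    (A : Matrix (Fin n) (Fin n) ℝ) (hA : ∀ v ∈ K, A.mulVec v ∈ K)
    (b : Fin n → ℝ) (hb : b ∈ K) (hb0 : b ≠ 0)
    (lam : ℝ) (hgt : localRho A b < lam)
    (x : Fin n → ℝ) (hx : x ∈ K)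
    (hsol : (A - lam • (1 : Matrix (Fin n) (Fin n) ℝ)).mulVec x = b) :
    ∃ v : Fin n → ℝ, v ≠ 0 ∧ v ∈ K ∧ A.mulVec v = lam • v := by
  have hlam : 0 < lam := (localRho_nonneg A b).trans_lt hgt
  obtain ⟨y, hy⟩ := summable_inv_pow_succ_smul_pow_mulVec_of_localRho_lt A b hgt
  have hyK : y ∈ K := hK.mem_of_hasSum hy fun m =>
    hK.smul_mem _ (by positivity) _ (pow_mulVec_mem hA hb m)
  have hAy : A *ᵥ y = lam • y - b :=
    mulVec_eq_of_hasSum_inv_pow_succ_smul_pow_mulVec hlam.ne' hy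
  have hAx : A *ᵥ x = lam • x + b := by
    rw [← hsol, sub_mulVec, smul_mulVec, one_mulVec]
    abel
  refine ⟨x + y, fun hxy => hb0 ?_, hK.add_mem hx hyK, ?_⟩
  · have hx0 : x = 0 :=
      hK.eq_zero_of_mem_of_neg_mem hx (by rwa [neg_eq_of_add_eq_zero_right hxy])
    rw [← hsol, hx0, mulVec_zero]
  · rw [mulVec_add, hAx, hAy, smul_add]
    abel

theorem stmt11 {n : ℕ} {K : Set (Fin n → ℝ)} (hK : IsProperCone K)
    (A : Matrix (Fin n) (Fin n) ℝ) (hA : ∀ v ∈ K, A.mulVec v ∈ K)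
    (b : Fin n → ℝ) (hb : b ∈ K) (hb0 : b ≠ 0)
    (lam : ℝ) (hlam : 0 < lam) (hgt : localRho A b < lam)
    (x : Fin n → ℝ) (hx : x ∈ K)
    (hsol : (A - lam • (1 : Matrix (Fin n) (Fin n) ℝ)).mulVec x = b) :
    ∃ v : Fin n → ℝ, v ≠ 0 ∧ v ∈ K ∧ A.mulVec v = lam • v :=
  stmt11_general hK A hA b hb hb0 lam hgt x hx hsol
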